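/- (Small mean implies short-time decay) Let s > 0, d ≥ 1 and 0 ≤ λ < 1. There exist constants α₁ > 0 and t₀ > 0, depending only on (s, d, λ), with the following property: for every ℤ^d-periodic function f : ℝ^d → ℂ that is square integrable on [0,1]^d and satisfies |∫_{[0,1]^d} f dx| ≤ λ (∫_{[0,1]^d} |f|² dx)^{1/2}, and for every 0 < t < t₀, one has ∑_{k ∈ ℤ^d} e^{−2t|k|^s} |ĉ_k(f)|² ≤ e^{−2α₁ t} ∫_{[0,1]^d} |f|² dx. (By Parseval this says ‖e^{−tΛ^s} f‖_{L²(𝕋^d)} ≤ e^{−α₁ t} ‖f‖_{L²(𝕋^d)}.) -/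

import Mathlib

open MeasureTheory

/-- The unit cube `[0,1]^d`, a fundamental domain for `ℤ^d`-periodic functions. -/
def unitBox (d : ℕ) : Set (Fin d → ℝ) :=
  Set.univ.pi fun _ : Fin d => Set.Icc (0 : ℝ) 1

/-- The `k`-th Fourier coefficient `ĉ_k(f) = ∫_{[0,1]^d} f(x) e^{-2πi k·x} dx`. -/
noncomputable def torusCoeff {d : ℕ} (f : (Fin d → ℝ) → ℂ) (k : Fin d → ℤ) : ℂ :=
  ∫ x in unitBox d,
    f x * Complex.exp (-(2 * Real.pi * Complex.I) * (∑ i, (k i : ℂ) * (x i : ℂ)))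

/-!
Only the zero mode escapes the damping. For `k ≠ 0` we have `|k|^s ≥ 1`, hence
`e^{-2t|k|^s} ≤ e^{-2t}`, and Bessel's inequality for the orthonormal characters `e^{2πik·x}` of
`L²([0,1]^d)` bounds the weighted sum by `(1 - e^{-2t}) |ĉ₀(f)|² + e^{-2t} ‖f‖²`. Since
`ĉ₀(f) = ∫ f`, the mean condition gives `|ĉ₀(f)|² ≤ λ² ‖f‖²`, so the sum is at most
`(λ² + (1 - λ²) e^{-2t}) ‖f‖²`; finally `e^{-2t} ≤ 1 - t` for `t ≤ 1/2` turns this into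
`e^{-(1-λ²)t} ‖f‖²`, i.e. `α₁ = (1 - λ²)/2` and `t₀ = 1/2`.
-/

open Real
open scoped ComplexConjugate

open UnitAddTorus in
noncomputable def boxChar {d : ℕ} (k : Fin d → ℤ) (x : Fin d → ℝ) : ℂ :=
  mFourier k fun i => (x i : UnitAddCircle)

section BoxCharacters

variable {d : ℕ}

-- The Haar probability measure on `ℝ/ℤ`, as in `Mathlib.Analysis.Fourier.AddCircleMulti`.
attribute [local instance] instMeasureSpaceUnitAddCircle

instance isFiniteMeasure_restrict_unitBox :
    IsFiniteMeasure ((volume : Measure (Fin d → ℝ)).restrict (unitBox d)) :=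
  isFiniteMeasure_restrict.mpr (isCompact_univ_pi fun _ => isCompact_Icc).measure_ne_top

lemma boxChar_apply (k : Fin d → ℤ) (x : Fin d → ℝ) :
    boxChar k x = Complex.exp (2 * π * Complex.I * ∑ i, (k i : ℂ) * (x i : ℂ)) := by
  simp only [boxChar, UnitAddTorus.mFourier, ContinuousMap.coe_mk, fourier_coe_apply,
    Complex.ofReal_one, div_one, Finset.mul_sum, Complex.exp_sum, mul_assoc]

lemma norm_boxChar (k : Fin d → ℤ) (x : Fin d → ℝ) : ‖boxChar k x‖ = 1 := by
  simp only [boxChar, UnitAddTorus.mFourier, ContinuousMap.coe_mk, norm_prod, fourier_apply,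
    Circle.norm_coe, Finset.prod_const_one]

lemma continuous_boxChar (k : Fin d → ℤ) : Continuous (boxChar k) :=
  (UnitAddTorus.mFourier k).continuous.comp <| by fun_prop

lemma integral_unitBox_eq_integral_unitAddTorus {E : Type*} [NormedAddCommGroup E]
    [NormedSpace ℝ E] (g : UnitAddTorus (Fin d) → E) :
    ∫ x in unitBox d, g (fun i => x i) = ∫ y, g y := by
  rw [UnitAddTorus.integral_preimage g 0, unitBox]
  refine (setIntegral_congr_set ?_).symm
  have hbox : {x : Fin d → ℝ | ∀ i, x i ∈ Set.Ioc ((0 : Fin d → ℝ) i) ((0 : Fin d → ℝ) i + 1)}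
      = Set.univ.pi fun _ => Set.Ioc 0 1 := by
    ext x; simp
  rw [hbox]
  exact Measure.pi_Ioc_ae_eq_pi_Icc

lemma integral_unitBox_conj_boxChar_mul (k l : Fin d → ℤ) :
    ∫ x in unitBox d, conj (boxChar k x) * boxChar l x = if k = l then 1 else 0 := by
  refine (integral_unitBox_eq_integral_unitAddTorus fun y =>
    conj (UnitAddTorus.mFourier k y) * UnitAddTorus.mFourier l y).trans ?_
  rw [← orthonormal_iff_ite.mp UnitAddTorus.orthonormal_mFourier k l, ContinuousMap.inner_toLp]
  simp only [mul_comm]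

lemma memLp_boxChar (k : Fin d → ℤ) :
    MemLp (boxChar k) 2 ((volume : Measure (Fin d → ℝ)).restrict (unitBox d)) :=
  .of_bound (continuous_boxChar k).aestronglyMeasurable 1 <|
    .of_forall fun x => (norm_boxChar k x).le

noncomputable def boxCharLp (k : Fin d → ℤ) :
    Lp ℂ 2 ((volume : Measure (Fin d → ℝ)).restrict (unitBox d)) :=
  (memLp_boxChar k).toLp (boxChar k)

lemma inner_boxCharLp_toLp (k : Fin d → ℤ) {g : (Fin d → ℝ) → ℂ}
    (hg : MemLp g 2 ((volume : Measure (Fin d → ℝ)).restrict (unitBox d))) :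
    inner ℂ (boxCharLp k) (hg.toLp g) = ∫ x in unitBox d, conj (boxChar k x) * g x := by
  rw [L2.inner_def]
  refine integral_congr_ae ?_
  filter_upwards [(memLp_boxChar k).coeFn_toLp, hg.coeFn_toLp] with x hk hg
  rw [boxCharLp, hk, hg, RCLike.inner_apply, mul_comm]

lemma orthonormal_boxCharLp : Orthonormal ℂ (boxCharLp (d := d)) := by
  rw [orthonormal_iff_ite]
  intro k l
  rw [← integral_unitBox_conj_boxChar_mul]
  exact inner_boxCharLp_toLp k (memLp_boxChar l)

lemma torusCoeff_eq_inner_boxCharLp {f : (Fin d → ℝ) → ℂ}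
    (hf : MemLp f 2 ((volume : Measure (Fin d → ℝ)).restrict (unitBox d))) (k : Fin d → ℤ) :
    torusCoeff f k = inner ℂ (boxCharLp k) (hf.toLp f) := by
  rw [inner_boxCharLp_toLp, torusCoeff]
  refine integral_congr_ae (.of_forall fun x => ?_)
  dsimp only
  rw [boxChar_apply, ← Complex.exp_conj, mul_comm]
  simp [map_sum, map_ofNat]

end BoxCharacters

lemma MeasureTheory.Lp.norm_sq_eq_integral_norm_sq {α 𝕜 E : Type*} [MeasurableSpace α]
    {μ : Measure α} [RCLike 𝕜] [NormedAddCommGroup E] [InnerProductSpace 𝕜 E]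
    (F : Lp E 2 μ) : ‖F‖ ^ 2 = ∫ x, ‖F x‖ ^ 2 ∂μ := by
  rw [← inner_self_eq_norm_sq (𝕜 := 𝕜), L2.inner_def, ← integral_re (L2.integrable_inner F F)]
  simp only [inner_self_eq_norm_sq]

lemma MeasureTheory.MemLp.norm_toLp_sq {α 𝕜 E : Type*} [MeasurableSpace α] {μ : Measure α}
    [RCLike 𝕜] [NormedAddCommGroup E] [InnerProductSpace 𝕜 E] {f : α → E} (hf : MemLp f 2 μ) :
    ‖hf.toLp f‖ ^ 2 = ∫ x, ‖f x‖ ^ 2 ∂μ := by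
  rw [Lp.norm_sq_eq_integral_norm_sq (𝕜 := 𝕜)]
  exact integral_congr_ae (hf.coeFn_toLp.mono fun x hx => by simp only [hx])

section Bessel

variable {d : ℕ} {f : (Fin d → ℝ) → ℂ}

lemma summable_norm_torusCoeff_sq (hf : MemLp f 2 (volume.restrict (unitBox d))) :
    Summable fun k => ‖torusCoeff f k‖ ^ 2 := by
  simpa only [torusCoeff_eq_inner_boxCharLp hf] using
    orthonormal_boxCharLp.inner_products_summable (hf.toLp f)

lemma tsum_norm_torusCoeff_sq_le (hf : MemLp f 2 (volume.restrict (unitBox d))) :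
    ∑' k, ‖torusCoeff f k‖ ^ 2 ≤ ∫ x in unitBox d, ‖f x‖ ^ 2 := by
  simpa only [torusCoeff_eq_inner_boxCharLp hf, hf.norm_toLp_sq (𝕜 := ℂ)] using
    orthonormal_boxCharLp.tsum_inner_products_le (hf.toLp f)

end Bessel

lemma tsum_mul_le_of_forall_ne_le {ι : Type*} {w F : ι → ℝ} {r : ℝ} (i₀ : ι)
    (hF : ∀ i, 0 ≤ F i) (hFs : Summable F) (hw : ∀ i, 0 ≤ w i) (hw₀ : w i₀ ≤ 1)
    (hwr : ∀ i ≠ i₀, w i ≤ r) :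
    ∑' i, w i * F i ≤ (1 - r) * F i₀ + r * ∑' i, F i := by
  classical
  set g : ι → ℝ := fun i => r * F i + if i = i₀ then (1 - r) * F i₀ else 0
  have hg : Summable g := (hFs.mul_left r).add (hasSum_ite_eq i₀ _).summable
  have hle : ∀ i, w i * F i ≤ g i := by
    intro i
    by_cases hi : i = i₀
    · subst hi
      simp only [g, if_pos]
      nlinarith [hF i]
    · simp only [g, if_neg hi, add_zero]
      exact mul_le_mul_of_nonneg_right (hwr i hi) (hF i)
  calc ∑' i, w i * F i
      ≤ ∑' i, g i := (hg.of_nonneg_of_le (fun i => mul_nonneg (hw i) (hF i)) hle).tsum_le_tsum hle hg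
    _ = (1 - r) * F i₀ + r * ∑' i, F i := by
      rw [(hFs.mul_left r).tsum_add (hasSum_ite_eq i₀ _).summable, tsum_mul_left, tsum_ite_eq]
      ring

lemma one_le_sqrt_sum_sq_of_ne_zero {d : ℕ} {k : Fin d → ℤ} (hk : k ≠ 0) :
    1 ≤ √(∑ i, (k i : ℝ) ^ 2) := by
  obtain ⟨i, hi⟩ := Function.ne_iff.mp hk
  have hki : (1 : ℝ) ≤ (k i : ℝ) ^ 2 :=
    mod_cast (one_le_sq_iff_one_le_abs _).mpr (Int.one_le_abs hi)
  rw [one_le_sqrt]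
  exact hki.trans (Finset.single_le_sum (fun j _ => sq_nonneg (k j : ℝ)) (Finset.mem_univ i))

lemma tsum_exp_neg_rpow_mul_norm_torusCoeff_sq_le {d : ℕ} {s t : ℝ} (hs : 0 ≤ s) (ht : 0 ≤ t)
    {f : (Fin d → ℝ) → ℂ} (hf : MemLp f 2 (volume.restrict (unitBox d))) :
    ∑' k, exp (-2 * t * √(∑ i, (k i : ℝ) ^ 2) ^ s) * ‖torusCoeff f k‖ ^ 2
      ≤ (1 - exp (-2 * t)) * ‖torusCoeff f 0‖ ^ 2
        + exp (-2 * t) * ∫ x in unitBox d, ‖f x‖ ^ 2 := by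
  have hdamp : ∀ k : Fin d → ℤ, k ≠ 0 →
      exp (-2 * t * √(∑ i, (k i : ℝ) ^ 2) ^ s) ≤ exp (-2 * t) := fun k hk => by
    have := one_le_rpow (one_le_sqrt_sum_sq_of_ne_zero hk) hs
    exact exp_le_exp.mpr (by nlinarith)
  have hzero : exp (-2 * t * √(∑ i, ((0 : Fin d → ℤ) i : ℝ) ^ 2) ^ s) ≤ 1 := by
    have := rpow_nonneg (sqrt_nonneg (∑ i, ((0 : Fin d → ℤ) i : ℝ) ^ 2)) s
    exact exp_le_one_iff.mpr (by nlinarith)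
  refine (tsum_mul_le_of_forall_ne_le (w := fun k => exp (-2 * t * √(∑ i, (k i : ℝ) ^ 2) ^ s))
    (F := fun k => ‖torusCoeff f k‖ ^ 2) 0 (fun _ => sq_nonneg _) (summable_norm_torusCoeff_sq hf)
    (fun _ => (exp_pos _).le) hzero hdamp).trans ?_
  gcongr
  exact tsum_norm_torusCoeff_sq_le hf

lemma exp_neg_two_mul_le_one_sub {t : ℝ} (ht₀ : 0 ≤ t) (ht : t ≤ 1 / 2) :
    exp (-2 * t) ≤ 1 - t := by
  have hpos : 0 < 1 + 2 * t := by linarith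
  have hmul : exp (-2 * t) * (1 + 2 * t) ≤ 1 :=
    calc exp (-2 * t) * (1 + 2 * t) ≤ exp (-2 * t) * exp (2 * t) := by
          gcongr; linarith [add_one_le_exp (2 * t)]
      _ = 1 := by rw [← exp_add]; simp
  refine le_of_mul_le_mul_right (hmul.trans ?_) hpos
  nlinarith

lemma one_sub_mul_add_exp_neg_two_mul_le {μ t : ℝ} (hμ : μ ≤ 1) (ht₀ : 0 ≤ t) (ht : t ≤ 1 / 2) :
    (1 - exp (-2 * t)) * μ + exp (-2 * t) ≤ exp (-((1 - μ) * t)) :=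
  calc (1 - exp (-2 * t)) * μ + exp (-2 * t) = μ + (1 - μ) * exp (-2 * t) := by ring
    _ ≤ μ + (1 - μ) * (1 - t) := by
        gcongr
        exact exp_neg_two_mul_le_one_sub ht₀ ht
    _ = -((1 - μ) * t) + 1 := by ring
    _ ≤ exp (-((1 - μ) * t)) := add_one_le_exp _

theorem stmt_14_general (d : ℕ) (s : ℝ) (hs : 0 < s)
    (lam : ℝ) (hlam0 : 0 ≤ lam) (hlam1 : lam < 1) :
    ∃ α₁ t₀ : ℝ, 0 < α₁ ∧ 0 < t₀ ∧
      ∀ f : (Fin d → ℝ) → ℂ,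
        (∀ (x : Fin d → ℝ) (k : Fin d → ℤ), f (x + fun i => (k i : ℝ)) = f x) →
        MemLp f 2 (volume.restrict (unitBox d)) →
        ‖∫ x in unitBox d, f x‖ ≤ lam * Real.sqrt (∫ x in unitBox d, ‖f x‖ ^ 2) →
        ∀ t : ℝ, 0 < t → t < t₀ →
          (∑' k : Fin d → ℤ,
              Real.exp (-2 * t * (Real.sqrt (∑ i, (k i : ℝ) ^ 2)) ^ s)
                * ‖torusCoeff f k‖ ^ 2)
            ≤ Real.exp (-2 * α₁ * t) * ∫ x in unitBox d, ‖f x‖ ^ 2 := by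
  have hlam : lam ^ 2 < 1 := by nlinarith
  refine ⟨(1 - lam ^ 2) / 2, 1 / 2, by linarith, by norm_num, ?_⟩
  intro f _ hf hmean t ht ht'
  set E := ∫ x in unitBox d, ‖f x‖ ^ 2
  have hmean_sq : ‖torusCoeff f 0‖ ^ 2 ≤ lam ^ 2 * E := by
    have hE : 0 ≤ E := integral_nonneg fun x => sq_nonneg _
    rw [show torusCoeff f 0 = ∫ x in unitBox d, f x by simp [torusCoeff], ← sq_sqrt hE, ← mul_pow]
    exact pow_le_pow_left₀ (norm_nonneg _) hmean 2
  have hdecay : exp (-2 * t) ≤ 1 := exp_le_one_iff.mpr (by linarith)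
  calc _ ≤ (1 - exp (-2 * t)) * ‖torusCoeff f 0‖ ^ 2 + exp (-2 * t) * E :=
        tsum_exp_neg_rpow_mul_norm_torusCoeff_sq_le hs.le ht.le hf
    _ ≤ ((1 - exp (-2 * t)) * lam ^ 2 + exp (-2 * t)) * E := by nlinarith
    _ ≤ exp (-((1 - lam ^ 2) * t)) * E := by
        gcongr
        exact one_sub_mul_add_exp_neg_two_mul_le hlam.le ht.le ht'.le
    _ = exp (-2 * ((1 - lam ^ 2) / 2) * t) * E := by ring_nf

theorem stmt_14 (d : ℕ) (hd : 1 ≤ d) (s : ℝ) (hs : 0 < s)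
    (lam : ℝ) (hlam0 : 0 ≤ lam) (hlam1 : lam < 1) :
    ∃ α₁ t₀ : ℝ, 0 < α₁ ∧ 0 < t₀ ∧
      ∀ f : (Fin d → ℝ) → ℂ,
        (∀ (x : Fin d → ℝ) (k : Fin d → ℤ), f (x + fun i => (k i : ℝ)) = f x) →
        MemLp f 2 (volume.restrict (unitBox d)) →
        ‖∫ x in unitBox d, f x‖ ≤ lam * Real.sqrt (∫ x in unitBox d, ‖f x‖ ^ 2) →
        ∀ t : ℝ, 0 < t → t < t₀ →
          (∑' k : Fin d → ℤ,
              Real.exp (-2 * t * (Real.sqrt (∑ i, (k i : ℝ) ^ 2)) ^ s)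
                * ‖torusCoeff f k‖ ^ 2)
            ≤ Real.exp (-2 * α₁ * t) * ∫ x in unitBox d, ‖f x‖ ^ 2 :=
  stmt_14_general d s hs lam hlam0 hlam1
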